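/- Let n ≥ 1 be an integer and let β satisfy 3 − 2√2 < β < 3 + 2√2. Then the smooth sensitivity of the Gini impurity at support size n with minimum support 1 equals its local sensitivity: sup_{k ∈ ℕ} e^{−βk}·g(max(1, n − k)) = g(n). -/

import Mathlib

/-- Local sensitivity of the Gini impurity as a function of the support size. -/
noncomputable def g (x : ℝ) : ℝ := 1 - (x / (x + 1))^2 - (1 / (x + 1))^2

/-!
Since `g x = 2x/(x+1)²`, the logarithmic derivative of `g` is `-(x-1)/(x(x+1))`, and on `[1, ∞)`
the quantity `(x-1)/(x(x+1))` is at most `3 - 2√2` (its maximum, attained at `x = 1 + √2`).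
Hence for `β ≥ 3 - 2√2` the function `t ↦ e^{βt} g t` is nondecreasing on `[1, ∞)`, which gives
`e^{-βk} g(max(1, n-k)) ≤ g n` for every `k`, with equality at `k = 0`.
-/

open Real Set

lemma g_eq_div {x : ℝ} (hx : x + 1 ≠ 0) : g x = 2 * x / (x + 1) ^ 2 := by
  unfold g
  field_simp
  ring

lemma g_pos {x : ℝ} (hx : 0 < x) : 0 < g x := by
  rw [g_eq_div (by positivity)]
  positivity

lemma hasDerivAt_g {x : ℝ} (hx : x + 1 ≠ 0) :
    HasDerivAt g (2 * (1 - x) / (x + 1) ^ 3) x := by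
  have hden : HasDerivAt (fun t : ℝ => t + 1) 1 x := (hasDerivAt_id x).add_const 1
  have hfst : HasDerivAt (fun t => t / (t + 1)) ((1 * (x + 1) - x * 1) / (x + 1) ^ 2) x :=
    (hasDerivAt_id x).div hden hx
  have hsnd : HasDerivAt (fun t => 1 / (t + 1)) ((0 * (x + 1) - 1 * 1) / (x + 1) ^ 2) x :=
    (hasDerivAt_const x 1).div hden hx
  refine (((hfst.pow 2).const_sub 1).sub (hsnd.pow 2)).congr_deriv ?_
  push_cast
  field_simp
  ring

lemma hasDerivAt_exp_mul_g (β : ℝ) {x : ℝ} (hx : x + 1 ≠ 0) :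
    HasDerivAt (fun t => exp (β * t) * g t)
      (2 * exp (β * x) * (β * x * (x + 1) - (x - 1)) / (x + 1) ^ 3) x := by
  have hexp : HasDerivAt (fun t => exp (β * t)) (exp (β * x) * β) x :=
    ((hasDerivAt_id x).const_mul β).exp.congr_deriv (by simp)
  refine (hexp.mul (hasDerivAt_g hx)).congr_deriv ?_
  rw [g_eq_div hx]
  field_simp
  ring

lemma sub_one_le_mul_mul_add_one {β x : ℝ} (hβ : 3 - 2 * √2 ≤ β) (hx : 0 ≤ x) :
    x - 1 ≤ β * x * (x + 1) := by
  set c := 3 - 2 * √2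
  have hsq : √2 ^ 2 = 2 := sq_sqrt (by norm_num)
  have hc : 0 < c := by nlinarith [sqrt_nonneg 2]
  -- `(c - 1)² = 4c` makes the quadratic a perfect square.
  have hsquare : 4 * c * (c * x * (x + 1) - (x - 1)) = (2 * c * x + c - 1) ^ 2 := by
    simp only [c]; ring_nf; rw [hsq]; ring
  have hcx : 0 ≤ c * x * (x + 1) - (x - 1) :=
    nonneg_of_mul_nonneg_right (hsquare ▸ sq_nonneg _) (by positivity)
  nlinarith [mul_le_mul_of_nonneg_right hβ (by positivity : 0 ≤ x * (x + 1))]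

lemma monotoneOn_exp_mul_g {β : ℝ} (hβ : 3 - 2 * √2 ≤ β) :
    MonotoneOn (fun t => exp (β * t) * g t) (Ici 1) := by
  have hderiv : ∀ x ∈ Ici (1 : ℝ), HasDerivAt (fun t => exp (β * t) * g t)
      (2 * exp (β * x) * (β * x * (x + 1) - (x - 1)) / (x + 1) ^ 3) x :=
    fun x hx => hasDerivAt_exp_mul_g β (by linarith [mem_Ici.mp hx])
  refine monotoneOn_of_hasDerivWithinAt_nonneg (convex_Ici 1)
    (fun x hx => (hderiv x hx).continuousAt.continuousWithinAt)
    (fun x hx => (hderiv x (interior_subset hx)).hasDerivWithinAt) fun x hx => ?_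
  rw [interior_Ici, mem_Ioi] at hx
  have hnum := sub_one_le_mul_mul_add_one hβ (by linarith : (0 : ℝ) ≤ x)
  have hden : 0 < x + 1 := by linarith
  exact div_nonneg (mul_nonneg (by positivity) (sub_nonneg.mpr hnum)) (by positivity)

lemma exp_neg_mul_g_max_le {β n k : ℝ} (hβ : 3 - 2 * √2 ≤ β) (hn : 1 ≤ n) (hk : 0 ≤ k) :
    exp (-β * k) * g (max 1 (n - k)) ≤ g n := by
  set m := max 1 (n - k)
  have hm : 1 ≤ m := le_max_left _ _
  have hβ0 : 0 ≤ β := le_trans (by nlinarith [sq_sqrt (show (0 : ℝ) ≤ 2 by norm_num)]) hβ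
  have hmono : exp (β * m) * g m ≤ exp (β * n) * g n :=
    monotoneOn_exp_mul_g hβ hm hn (max_le hn (by linarith))
  calc exp (-β * k) * g m
      ≤ exp (-β * (n - m)) * g m := by
        have hnm : n - m ≤ k := by linarith [le_max_right 1 (n - k)]
        gcongr ?_ * _
        · exact (g_pos (by linarith)).le
        · exact exp_le_exp.mpr (by nlinarith)
    _ = exp (-β * n) * (exp (β * m) * g m) := by
        rw [← mul_assoc, ← exp_add]; ring_nf
    _ ≤ exp (-β * n) * (exp (β * n) * g n) := by gcongr
    _ = g n := by rw [← mul_assoc, ← exp_add]; simp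

theorem smooth_sensitivity_eq_local_mid_beta_general (n : ℤ) (hn : 1 ≤ n) (β : ℝ)
    (hβ1 : 3 - 2 * Real.sqrt 2 < β) :
    (⨆ k : ℕ, Real.exp (-β * (k : ℝ)) * g (max (1 : ℝ) ((n : ℝ) - (k : ℝ)))) = g (n : ℝ) := by
  have hn' : (1 : ℝ) ≤ n := by exact_mod_cast hn
  have hbound : ∀ k : ℕ, exp (-β * k) * g (max 1 (n - k)) ≤ g n :=
    fun k => exp_neg_mul_g_max_le hβ1.le hn' k.cast_nonneg
  refine le_antisymm (ciSup_le hbound) ?_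
  refine le_ciSup_of_le ⟨g n, forall_mem_range.mpr hbound⟩ 0 ?_
  simp [max_eq_right hn']

theorem smooth_sensitivity_eq_local_mid_beta (n : ℤ) (hn : 1 ≤ n) (β : ℝ)
    (hβ1 : 3 - 2 * Real.sqrt 2 < β) (hβ2 : β < 3 + 2 * Real.sqrt 2) :
    (⨆ k : ℕ, Real.exp (-β * (k : ℝ)) * g (max (1 : ℝ) ((n : ℝ) - (k : ℝ)))) = g (n : ℝ) :=
  smooth_sensitivity_eq_local_mid_beta_general n hn β hβ1
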